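/- arXiv:2605.07682 — 2 statements merged into one kernel-verified Lean document; each statement's English description precedes it below -/
import Mathlib

section
/- There is no sequence of real numbers (λ_k) indexed by odd positive integers such that (k⁴ − l⁴)/(4kl) = k·λ_l − l·λ_k for all odd positive integers k, l. -/
/-- There is no sequence (λ_k) indexed by odd positive integers with
(k⁴ − l⁴)/(4kl) = k·λ_l − l·λ_k for all odd positive integers k, l. -/
theorem no_lambda_sequence :
    ¬ ∃ lam : ℕ → ℝ, ∀ k l : ℕ, Odd k → Odd l → 0 < k → 0 < l →
      ((k : ℝ) ^ 4 - (l : ℝ) ^ 4) / (4 * k * l) = (k : ℝ) * lam l - (l : ℝ) * lam k := by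
  rintro ⟨lam, h⟩
  have h31 := h 3 1 (by decide) (by decide) (by norm_num) (by norm_num)
  have h51 := h 5 1 (by decide) (by decide) (by norm_num) (by norm_num)
  have h35 := h 3 5 (by decide) (by decide) (by norm_num) (by norm_num)
  norm_num at h31 h51 h35
  linarith
end

section
/- The 2-cocycle Ω(u∂_x, v∂_x) = ∫₀^π (u_x v_{xx} − u_{xx} v_x) dx on the Lie algebra of smooth vector fields on [0,π] vanishing at the endpoints is not a coboundary: there is no linear functional λ on this Lie algebra with Ω(u,v) = λ([u,v]) for all u, v. -/
/-- Membership in the Lie algebra of smooth vector fields on [0,π]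
vanishing at the endpoints. -/
def InVect0 (u : ℝ → ℝ) : Prop :=
  ContDiff ℝ (⊤ : ℕ∞) u ∧ u 0 = 0 ∧ u Real.pi = 0

/-- The bracket [u,v] = u v' − u' v. -/
noncomputable def br (u v : ℝ → ℝ) : ℝ → ℝ :=
  fun x => u x * deriv v x - deriv u x * v x

/-- Ω(u,v) = ∫₀^π (u'v'' − u''v') dx. -/
noncomputable def Om (u v : ℝ → ℝ) : ℝ :=
  ∫ x in (0:ℝ)..Real.pi,
    (deriv u x * deriv (deriv v) x - deriv (deriv u) x * deriv v x)

/-! ### Auxiliary definitions and lemmas -/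

/-- The basic vector field `sin (k x)`. -/
noncomputable def sk (k : ℝ) : ℝ → ℝ := fun x => Real.sin (k * x)

lemma hds (k x : ℝ) : HasDerivAt (sk k) (k * Real.cos (k * x)) x := by
  have h := (Real.hasDerivAt_sin (k * x)).comp x ((hasDerivAt_id x).const_mul k)
  refine h.congr_deriv (Eq.symm ?_)
  ring

lemma hdc (k x : ℝ) :
    HasDerivAt (fun y => k * Real.cos (k * y)) (-(k * k) * Real.sin (k * x)) x := by
  have h := ((Real.hasDerivAt_cos (k * x)).comp x ((hasDerivAt_id x).const_mul k)).const_mul k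
  refine h.congr_deriv (Eq.symm ?_)
  ring

lemma hcc (c k x : ℝ) :
    HasDerivAt (fun y => c * Real.cos (k * y)) (-(c * k) * Real.sin (k * x)) x := by
  have h := ((Real.hasDerivAt_cos (k * x)).comp x ((hasDerivAt_id x).const_mul k)).const_mul c
  refine h.congr_deriv (Eq.symm ?_)
  ring

lemma deriv_sk (k : ℝ) : deriv (sk k) = fun x => k * Real.cos (k * x) :=
  funext fun x => (hds k x).deriv

lemma deriv_kcos (k : ℝ) :
    deriv (fun x => k * Real.cos (k * x)) = fun x => -(k * k) * Real.sin (k * x) :=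
  funext fun x => (hdc k x).deriv

lemma br_sk (m n : ℝ) :
    br (sk m) (sk n) =
      fun x => Real.sin (m * x) * (n * Real.cos (n * x)) -
        (m * Real.cos (m * x)) * Real.sin (n * x) := by
  funext x
  simp only [br, deriv_sk, sk]

lemma sin_two_pi' : Real.sin (2 * Real.pi) = 0 := by
  simp [Real.sin_two_pi]

lemma sin_three_pi : Real.sin (3 * Real.pi) = 0 := by
  have : (3:ℝ) * Real.pi = Real.pi + 2 * Real.pi := by ring
  rw [this, Real.sin_add_two_pi, Real.sin_pi]

lemma sin_four_pi : Real.sin (4 * Real.pi) = 0 := by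
  have : (4:ℝ) * Real.pi = 2 * Real.pi + 2 * Real.pi := by ring
  rw [this, Real.sin_add_two_pi, sin_two_pi']

lemma cos_three_pi : Real.cos (3 * Real.pi) = -1 := by
  have : (3:ℝ) * Real.pi = Real.pi + 2 * Real.pi := by ring
  rw [this, Real.cos_add_two_pi, Real.cos_pi]

lemma cos_five_pi : Real.cos (5 * Real.pi) = -1 := by
  have : (5:ℝ) * Real.pi = 3 * Real.pi + 2 * Real.pi := by ring
  rw [this, Real.cos_add_two_pi, cos_three_pi]

lemma inv_sk (k : ℝ) (hk : Real.sin (k * Real.pi) = 0) : InVect0 (sk k) := by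
  refine ⟨?_, by simp [sk], hk⟩
  exact Real.contDiff_sin.comp (contDiff_const.mul contDiff_id)

lemma inv_br (m n : ℝ) (hm : Real.sin (m * Real.pi) = 0)
    (hn : Real.sin (n * Real.pi) = 0) : InVect0 (br (sk m) (sk n)) := by
  rw [br_sk]
  refine ⟨?_, by simp, by simp [hm, hn]⟩
  have hs : ∀ a : ℝ, ContDiff ℝ (⊤ : ℕ∞) (fun x : ℝ => Real.sin (a * x)) :=
    fun a => Real.contDiff_sin.comp (contDiff_const.mul contDiff_id)
  have hc : ∀ a : ℝ, ContDiff ℝ (⊤ : ℕ∞) (fun x : ℝ => Real.cos (a * x)) :=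
    fun a => Real.contDiff_cos.comp (contDiff_const.mul contDiff_id)
  exact ((hs m).mul (contDiff_const.mul (hc n))).sub
    ((contDiff_const.mul (hc m)).mul (hs n))

lemma inv_smul (c : ℝ) {u : ℝ → ℝ} (hu : InVect0 u) : InVect0 (c • u) :=
  ⟨hu.1.const_smul c, by simp [hu.2.1], by simp [hu.2.2]⟩

lemma om12 : Om (sk 1) (sk 2) = -(20/3) := by
  have key : ∀ x ∈ Set.uIcc (0:ℝ) Real.pi,
      HasDerivAt (fun y => (1/3 : ℝ) * Real.cos (3*y) + 3 * Real.cos (1*y))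
        (1 * Real.cos (1*x) * (-(2*2) * Real.sin (2*x)) -
          -(1*1) * Real.sin (1*x) * (2 * Real.cos (2*x))) x := by
    intro x _
    have h1 := (hcc (1/3) 3 x).add (hcc 3 1 x)
    refine h1.congr_deriv (Eq.symm ?_)
    rw [show (3:ℝ)*x = 2*x + x from by ring]
    simp only [Real.sin_add, Real.cos_add, Real.sin_two_mul, Real.cos_two_mul, one_mul]
    ring
  have hcont : Continuous fun x : ℝ =>
      1 * Real.cos (1*x) * (-(2*2) * Real.sin (2*x)) -
        -(1*1) * Real.sin (1*x) * (2 * Real.cos (2*x)) := by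
    fun_prop
  have hI := intervalIntegral.integral_eq_sub_of_hasDerivAt key
    (hcont.intervalIntegrable 0 Real.pi)
  rw [Om]
  simp only [deriv_sk, deriv_kcos]
  rw [hI]
  norm_num [cos_three_pi, Real.cos_pi]

lemma om23 : Om (sk 2) (sk 3) = -(156/5) := by
  have key : ∀ x ∈ Set.uIcc (0:ℝ) Real.pi,
      HasDerivAt (fun y => (3/5 : ℝ) * Real.cos (5*y) + 15 * Real.cos (1*y))
        (2 * Real.cos (2*x) * (-(3*3) * Real.sin (3*x)) -
          -(2*2) * Real.sin (2*x) * (3 * Real.cos (3*x))) x := by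
    intro x _
    have h1 := (hcc (3/5) 5 x).add (hcc 15 1 x)
    refine h1.congr_deriv (Eq.symm ?_)
    rw [show (5:ℝ)*x = 2*x + (2*x + x) from by ring,
        show (3:ℝ)*x = 2*x + x from by ring]
    simp only [Real.sin_add, Real.cos_add, Real.sin_two_mul, Real.cos_two_mul, one_mul]
    linear_combination (-60 * Real.sin x * Real.cos x ^ 2) * Real.sin_sq_add_cos_sq x
  have hcont : Continuous fun x : ℝ =>
      2 * Real.cos (2*x) * (-(3*3) * Real.sin (3*x)) -
        -(2*2) * Real.sin (2*x) * (3 * Real.cos (3*x)) := by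
    fun_prop
  have hI := intervalIntegral.integral_eq_sub_of_hasDerivAt key
    (hcont.intervalIntegrable 0 Real.pi)
  rw [Om]
  simp only [deriv_sk, deriv_kcos]
  rw [hI]
  norm_num [cos_five_pi, Real.cos_pi]

lemma om14 : Om (sk 1) (sk 4) = -(136/15) := by
  have key : ∀ x ∈ Set.uIcc (0:ℝ) Real.pi,
      HasDerivAt (fun y => (6/5 : ℝ) * Real.cos (5*y) + (10/3) * Real.cos (3*y))
        (1 * Real.cos (1*x) * (-(4*4) * Real.sin (4*x)) -
          -(1*1) * Real.sin (1*x) * (4 * Real.cos (4*x))) x := by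
    intro x _
    have h1 := (hcc (6/5) 5 x).add (hcc (10/3) 3 x)
    refine h1.congr_deriv (Eq.symm ?_)
    rw [show (5:ℝ)*x = 2*x + (2*x + x) from by ring,
        show (4:ℝ)*x = 2*(2*x) from by ring,
        show (3:ℝ)*x = 2*x + x from by ring]
    simp only [Real.sin_add, Real.cos_add, Real.sin_two_mul, Real.cos_two_mul, one_mul]
    linear_combination (-24 * Real.sin x * Real.cos x ^ 2) * Real.sin_sq_add_cos_sq x
  have hcont : Continuous fun x : ℝ =>
      1 * Real.cos (1*x) * (-(4*4) * Real.sin (4*x)) -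
        -(1*1) * Real.sin (1*x) * (4 * Real.cos (4*x)) := by
    fun_prop
  have hI := intervalIntegral.integral_eq_sub_of_hasDerivAt key
    (hcont.intervalIntegrable 0 Real.pi)
  rw [Om]
  simp only [deriv_sk, deriv_kcos]
  rw [hI]
  norm_num [cos_five_pi, cos_three_pi, Real.cos_pi]

lemma key_identity :
    (5 : ℝ) • br (sk 1) (sk 2) + br (sk 1) (sk 4) = (3 : ℝ) • br (sk 2) (sk 3) := by
  funext x
  simp only [br_sk, Pi.add_apply, Pi.smul_apply, smul_eq_mul]
  rw [show (4:ℝ)*x = 2*(2*x) from by ring,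
      show (3:ℝ)*x = 2*x + x from by ring]
  simp only [Real.sin_add, Real.cos_add, Real.sin_two_mul, Real.cos_two_mul, one_mul]
  linear_combination (36 * Real.sin x * Real.cos x ^ 2) * Real.sin_sq_add_cos_sq x

/-- The cocycle Ω on vector fields on [0,π] vanishing at the endpoints is not a
coboundary: there is no linear functional λ on this Lie algebra
with Ω(u,v) = λ([u,v]) for all u, v. -/
theorem omega_not_coboundary :
    ¬ ∃ lam : (ℝ → ℝ) → ℝ,
      (∀ u v : ℝ → ℝ, InVect0 u → InVect0 v → lam (u + v) = lam u + lam v) ∧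
      (∀ (c : ℝ) (u : ℝ → ℝ), InVect0 u → lam (c • u) = c * lam u) ∧
      (∀ u v : ℝ → ℝ, InVect0 u → InVect0 v → Om u v = lam (br u v)) := by
  rintro ⟨lam, hadd, hsmul, hOm⟩
  have hpi1 : Real.sin ((1:ℝ) * Real.pi) = 0 := by rw [one_mul, Real.sin_pi]
  have hpi2 : Real.sin ((2:ℝ) * Real.pi) = 0 := sin_two_pi'
  have hpi3 : Real.sin ((3:ℝ) * Real.pi) = 0 := sin_three_pi
  have hpi4 : Real.sin ((4:ℝ) * Real.pi) = 0 := sin_four_pi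
  have hs1 : InVect0 (sk 1) := inv_sk 1 hpi1
  have hs2 : InVect0 (sk 2) := inv_sk 2 hpi2
  have hs3 : InVect0 (sk 3) := inv_sk 3 hpi3
  have hs4 : InVect0 (sk 4) := inv_sk 4 hpi4
  have hw1 : InVect0 (br (sk 1) (sk 2)) := inv_br 1 2 hpi1 hpi2
  have hw2 : InVect0 (br (sk 2) (sk 3)) := inv_br 2 3 hpi2 hpi3
  have hw3 : InVect0 (br (sk 1) (sk 4)) := inv_br 1 4 hpi1 hpi4
  have e1 : lam ((5:ℝ) • br (sk 1) (sk 2) + br (sk 1) (sk 4)) =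
      5 * lam (br (sk 1) (sk 2)) + lam (br (sk 1) (sk 4)) := by
    rw [hadd _ _ (inv_smul 5 hw1) hw3, hsmul 5 _ hw1]
  have e2 : lam ((3:ℝ) • br (sk 2) (sk 3)) = 3 * lam (br (sk 2) (sk 3)) :=
    hsmul 3 _ hw2
  have e3 : 5 * lam (br (sk 1) (sk 2)) + lam (br (sk 1) (sk 4)) =
      3 * lam (br (sk 2) (sk 3)) := by
    rw [← e1, key_identity, e2]
  rw [← hOm _ _ hs1 hs2, ← hOm _ _ hs1 hs4, ← hOm _ _ hs2 hs3] at e3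
  rw [om12, om14, om23] at e3
  norm_num at e3
end
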